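/- Let H = {1,...,n}³ with 3n² axis-parallel line switches (one for each line in the x-, y-, or z-direction). There exists a ±1 assignment a : H → {±1} such that for all switch settings ℓ_{ij}, ℓ_{ik}, ℓ_{jk} ∈ {±1}, ∑_{i,j,k} a_{ijk} ℓ_{ij} ℓ_{ik} ℓ_{jk} ≤ (6 ln 2)^{1/2} n^{5/2}; and for every ±1 assignment there exist switch settings with ∑_{i,j,k} a_{ijk} ℓ_{ij} ℓ_{ik} ℓ_{jk} ≥ c·n^{5/2} for an absolute constant c > 0. Hence the maximum discrepancy of the cubic board is Θ(n^{5/2}). -/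

import Mathlib

/-!
Upper bound: for a uniformly random sign pattern `a` and a fixed switch setting, the products
`a i j k * ℓ i j * ℓ i k * ℓ j k` are again independent uniform signs, so by the Chernoff bound
the switched sum exceeds `t = √(6 log 2) n^(5/2)` with probability `< 2^(-3n²)`. A union bound
over the `2^(3n²)` switch settings leaves a pattern that beats all of them.

Lower bound: by the second and fourth moments and Hölder, a sum of `m` random signs has
`E |ε₁ + ⋯ + εₘ| ≥ √(m/3)`. So in each plane `z = k` some choice of the column switches `ℓ j k`
makes the absolute row sums add up to at least `n √(n/3)`, and the row switches `ℓ i k` then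
turn every row sum positive.
-/

open Finset Real

theorem sum_units_int {M : Type*} [AddCommMonoid M] (f : ℤˣ → M) :
    ∑ u, f u = f 1 + f (-1) := by
  simp [UnitsInt.univ]

theorem sum_units_fin_succ {R : Type*} [AddCommMonoid R] (N : ℕ) (f : ℤ → R) :
    ∑ σ : Fin (N + 1) → ℤˣ, f (∑ i, (σ i : ℤ)) =
      ∑ σ : Fin N → ℤˣ, (f (∑ i, (σ i : ℤ) + 1) + f (∑ i, (σ i : ℤ) - 1)) := by
  rw [← (Fin.consEquiv fun _ => ℤˣ).sum_comp, Fintype.sum_prod_type, sum_units_int,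
    ← sum_add_distrib]
  simp [Fin.consEquiv, Fin.sum_univ_succ, add_comm, sub_eq_add_neg]

theorem sum_sum_units_sq (N : ℕ) :
    ∑ σ : Fin N → ℤˣ, (∑ i, (σ i : ℤ)) ^ 2 = N * 2 ^ N := by
  induction N with
  | zero => simp
  | succ N ih =>
    rw [sum_units_fin_succ (f := (· ^ 2))]
    have h : ∀ x : ℤ, (x + 1) ^ 2 + (x - 1) ^ 2 = 2 * x ^ 2 + 2 := fun x => by ring
    simp only [h, sum_add_distrib, ← mul_sum, ih, sum_const, card_univ, Fintype.card_fun,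
      Fintype.card_units_int, Fintype.card_fin, nsmul_eq_mul]
    push_cast
    ring

theorem sum_sum_units_pow_four (N : ℕ) :
    ∑ σ : Fin N → ℤˣ, (∑ i, (σ i : ℤ)) ^ 4 = (3 * N ^ 2 - 2 * N) * 2 ^ N := by
  induction N with
  | zero => simp
  | succ N ih =>
    rw [sum_units_fin_succ (f := (· ^ 4))]
    have h : ∀ x : ℤ, (x + 1) ^ 4 + (x - 1) ^ 4 = 2 * x ^ 4 + 12 * x ^ 2 + 2 := fun x => by ring
    simp only [h, sum_add_distrib, ← mul_sum, ih, sum_sum_units_sq, sum_const, card_univ,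
      Fintype.card_fun, Fintype.card_units_int, Fintype.card_fin, nsmul_eq_mul]
    push_cast
    ring

theorem sum_sq_pow_three_le {α : Type*} (s : Finset α) (f : α → ℝ) :
    (∑ x ∈ s, f x ^ 2) ^ 3 ≤ (∑ x ∈ s, |f x|) ^ 2 * ∑ x ∈ s, f x ^ 4 := by
  set A := ∑ x ∈ s, |f x|
  set B := ∑ x ∈ s, f x ^ 2
  set C := ∑ x ∈ s, f x ^ 4
  set D := ∑ x ∈ s, |f x| ^ 3
  -- two Cauchy–Schwarz steps: `f² = |f|^(1/2) |f|^(3/2)` and `|f|³ = |f| f²`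
  have hAD : B ^ 2 ≤ A * D := by
    have h := sum_mul_sq_le_sq_mul_sq s (fun x => √|f x|) (fun x => |f x| * √|f x|)
    have hsq : ∀ x, √|f x| ^ 2 = |f x| := fun x => sq_sqrt (abs_nonneg _)
    have e : ∀ x, √|f x| * (|f x| * √|f x|) = f x ^ 2 := fun x => by
      rw [mul_left_comm, ← sq, hsq, ← sq, sq_abs]
    simp only [e, mul_pow, hsq, ← pow_succ] at h
    exact h
  have hDC : D ^ 2 ≤ B * C := by
    have h := sum_mul_sq_le_sq_mul_sq s (fun x => |f x|) (fun x => f x ^ 2)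
    have e : ∀ x, |f x| * f x ^ 2 = |f x| ^ 3 := fun x => by rw [← sq_abs]; ring
    simp only [e, sq_abs, ← pow_mul] at h
    exact h
  have hB : 0 ≤ B := sum_nonneg fun x _ => sq_nonneg _
  rcases hB.eq_or_lt with hB0 | hBpos
  · rw [← hB0, zero_pow three_ne_zero]
    exact mul_nonneg (sq_nonneg A) (sum_nonneg fun x _ => by positivity)
  · have : B * B ^ 3 ≤ B * (A ^ 2 * C) := by
      calc B * B ^ 3 = (B ^ 2) ^ 2 := by ring
        _ ≤ (A * D) ^ 2 := pow_le_pow_left₀ (sq_nonneg B) hAD 2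
        _ = A ^ 2 * D ^ 2 := by ring
        _ ≤ A ^ 2 * (B * C) := mul_le_mul_of_nonneg_left hDC (sq_nonneg A)
        _ = B * (A ^ 2 * C) := by ring
    exact le_of_mul_le_mul_left this hBpos

theorem sqrt_div_three_mul_two_pow_le_sum_abs (N : ℕ) :
    √(N / 3) * 2 ^ N ≤ ((∑ σ : Fin N → ℤˣ, |∑ i, (σ i : ℤ)| : ℤ) : ℝ) := by
  set S : (Fin N → ℤˣ) → ℝ := fun σ => ((∑ i, (σ i : ℤ) : ℤ) : ℝ)
  have hA : ((∑ σ : Fin N → ℤˣ, |∑ i, (σ i : ℤ)| : ℤ) : ℝ) = ∑ σ, |S σ| := by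
    simp only [S]; push_cast; rfl
  have hB : ∑ σ, S σ ^ 2 = N * 2 ^ N := by
    simp only [S]; exact_mod_cast sum_sum_units_sq N
  have hC : ∑ σ, S σ ^ 4 ≤ 3 * N ^ 2 * 2 ^ N := by
    have h : ∑ σ : Fin N → ℤˣ, (∑ i, (σ i : ℤ)) ^ 4 ≤ 3 * N ^ 2 * 2 ^ N := by
      rw [sum_sum_units_pow_four]
      gcongr
      linarith [(N.cast_nonneg : (0 : ℤ) ≤ N)]
    simp only [S]; exact_mod_cast h
  have hHolder := sum_sq_pow_three_le univ S
  rw [hB] at hHolder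
  rw [hA]
  set A := ∑ σ, |S σ|
  have hA0 : 0 ≤ A := sum_nonneg fun σ _ => abs_nonneg _
  refine (pow_le_pow_iff_left₀ (by positivity) hA0 two_ne_zero).mp ?_
  rw [mul_pow, sq_sqrt (by positivity)]
  rcases N.eq_zero_or_pos with rfl | hN
  · simpa using sq_nonneg A
  · have hN' : (0 : ℝ) < N ^ 2 * 2 ^ N := by positivity
    have : N ^ 2 * 2 ^ N * (N * (2 ^ N) ^ 2) ≤ N ^ 2 * 2 ^ N * (3 * A ^ 2) := by
      calc _ = ((N : ℝ) * 2 ^ N) ^ 3 := by ring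
        _ ≤ A ^ 2 * (3 * N ^ 2 * 2 ^ N) := hHolder.trans (by gcongr)
        _ = _ := by ring
    have := le_of_mul_le_mul_left this hN'
    linarith

theorem rpow_five_half {x : ℝ} (hx : 0 ≤ x) : x ^ (5 / 2 : ℝ) = x ^ 2 * √x := by
  rw [sqrt_eq_rpow, ← rpow_natCast, ← rpow_add' hx (by norm_num)]
  norm_num

theorem exists_units_int_mul_eq_abs (x : ℤ) : ∃ u : ℤˣ, (u : ℤ) * x = |x| := by
  rcases abs_choice x with h | h
  · exact ⟨1, by simp [h]⟩
  · exact ⟨-1, by simp [h]⟩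

theorem exists_signs_mul_sqrt_le_sum {ι : Type*} [Fintype ι] {m : ℕ} (M : ι → Fin m → ℤˣ) :
    ∃ (ε : ι → ℤˣ) (δ : Fin m → ℤˣ),
      Fintype.card ι * √(m / 3) ≤ ((∑ i, ∑ j, (M i j : ℤ) * ε i * δ j : ℤ) : ℝ) := by
  have hrow : ∀ i, ∑ δ : Fin m → ℤˣ, |∑ j, (M i j : ℤ) * δ j| =
      ∑ δ : Fin m → ℤˣ, |∑ j, (δ j : ℤ)| := fun i => by
    simpa using Equiv.sum_comp (Equiv.mulLeft (M i)) fun δ : Fin m → ℤˣ => |∑ j, (δ j : ℤ)|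
  obtain ⟨δ, -, hδ⟩ : ∃ δ : Fin m → ℤˣ, δ ∈ univ ∧ Fintype.card ι * √(m / 3) ≤
      ((∑ i, |∑ j, (M i j : ℤ) * δ j| : ℤ) : ℝ) := by
    refine exists_le_of_sum_le univ_nonempty ?_
    calc ∑ _δ : Fin m → ℤˣ, Fintype.card ι * √(m / 3)
        = Fintype.card ι * (√(m / 3) * 2 ^ m) := by simp; ring
      _ ≤ Fintype.card ι * ((∑ δ : Fin m → ℤˣ, |∑ j, (δ j : ℤ)| : ℤ) : ℝ) := by
        gcongr; exact sqrt_div_three_mul_two_pow_le_sum_abs m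
      _ = ∑ δ : Fin m → ℤˣ, ((∑ i, |∑ j, (M i j : ℤ) * δ j| : ℤ) : ℝ) := by
        rw [← Int.cast_sum, sum_comm, sum_congr rfl fun i _ => hrow i]
        simp
  choose ε hε using fun i => exists_units_int_mul_eq_abs (∑ j, (M i j : ℤ) * δ j)
  refine ⟨ε, δ, hδ.trans_eq ?_⟩
  simp only [← hε, mul_sum]
  congr 1
  exact sum_congr rfl fun i _ => sum_congr rfl fun j _ => by ring

theorem cube_discrepancy_lower (n : ℕ) (a : Fin n → Fin n → Fin n → ℤ)
    (ha : ∀ i j k, a i j k = 1 ∨ a i j k = -1) :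
    ∃ L₁ L₂ L₃ : Fin n → Fin n → ℤ,
      (∀ i j, L₁ i j = 1 ∨ L₁ i j = -1) ∧
      (∀ i k, L₂ i k = 1 ∨ L₂ i k = -1) ∧
      (∀ j k, L₃ j k = 1 ∨ L₃ j k = -1) ∧
      (√3)⁻¹ * (n : ℝ) ^ ((5 : ℝ) / 2)
        ≤ ((∑ i, ∑ j, ∑ k, a i j k * L₁ i j * L₂ i k * L₃ j k : ℤ) : ℝ) := by
  choose ε δ hplane using fun k =>
    exists_signs_mul_sqrt_le_sum fun i j => (Int.isUnit_iff.mpr (ha i j k)).unit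
  refine ⟨fun _ _ => 1, fun i k => ε k i, fun j k => δ k j, fun _ _ => Or.inl rfl,
    fun i k => Int.isUnit_iff.mp (ε k i).isUnit, fun j k => Int.isUnit_iff.mp (δ k j).isUnit, ?_⟩
  calc (√3)⁻¹ * (n : ℝ) ^ ((5 : ℝ) / 2) = ∑ _k : Fin n, n * √(n / 3) := by
        rw [rpow_five_half n.cast_nonneg, sqrt_div n.cast_nonneg]
        simp only [sum_const, card_univ, Fintype.card_fin, nsmul_eq_mul]
        ring
    _ ≤ ∑ k, ((∑ i, ∑ j, a i j k * ε k i * δ k j : ℤ) : ℝ) :=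
        sum_le_sum fun k _ => by simpa using hplane k
    _ = ((∑ i, ∑ j, ∑ k, a i j k * 1 * ε k i * δ k j : ℤ) : ℝ) := by
        rw [← Int.cast_sum, ((sum_congr rfl fun i _ => sum_comm).trans sum_comm).symm]
        simp

theorem exists_forall_notMem_of_card_mul_card_lt {α β κ : Type*} [Fintype α] [Fintype κ]
    (φ : κ → α → β) (hφ : ∀ k, Function.Injective (φ k)) (F : Finset β)
    (h : Fintype.card κ * #F < Fintype.card α) : ∃ x, ∀ k, φ k x ∉ F := by
  by_contra! hbad
  choose k hk using hbad
  have hinj : Function.Injective fun x => (k x, (⟨φ (k x) x, hk x⟩ : F)) := by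
    intro x y hxy
    simp only [Prod.mk.injEq, Subtype.mk.injEq] at hxy
    exact hφ (k x) (hxy.2.trans (by rw [hxy.1]))
  have := Fintype.card_le_of_injective _ hinj
  simp only [Fintype.card_prod, Fintype.card_coe] at this
  omega

theorem sum_exp_mul_sum_units {ι : Type*} [Fintype ι] [DecidableEq ι] (l : ℝ) :
    ∑ σ : ι → ℤˣ, exp (l * ((∑ i, (σ i : ℤ) : ℤ) : ℝ)) = (2 * cosh l) ^ Fintype.card ι := by
  have h : ∀ σ : ι → ℤˣ, exp (l * ((∑ i, (σ i : ℤ) : ℤ) : ℝ)) = ∏ i, exp (l * (σ i : ℤ)) := by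
    intro σ
    rw [← exp_sum, ← mul_sum, Int.cast_sum]
  simp only [h]
  rw [← Fintype.prod_sum fun (_ : ι) (u : ℤˣ) => exp (l * ((u : ℤ) : ℝ))]
  simp [cosh_eq, mul_div_cancel₀]

theorem card_filter_lt_sum_units_mul_exp_lt {ι : Type*} [Fintype ι] [DecidableEq ι] {l : ℝ}
    (hl : 0 < l) (t : ℝ) :
    #{σ : ι → ℤˣ | t < ((∑ i, (σ i : ℤ) : ℤ) : ℝ)} * exp (l * t) <
      (2 * cosh l) ^ Fintype.card ι := by
  set F : Finset (ι → ℤˣ) := {σ | t < ((∑ i, (σ i : ℤ) : ℤ) : ℝ)}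
  rcases F.eq_empty_or_nonempty with hF | hF
  · rw [hF, card_empty, Nat.cast_zero, zero_mul]
    exact pow_pos (mul_pos two_pos (cosh_pos l)) _
  · rw [← sum_exp_mul_sum_units, ← nsmul_eq_mul]
    calc #F • exp (l * t) = ∑ _σ ∈ F, exp (l * t) := (sum_const _).symm
      _ < ∑ σ ∈ F, exp (l * ((∑ i, (σ i : ℤ) : ℤ) : ℝ)) :=
          sum_lt_sum_of_nonempty hF fun σ hσ => exp_lt_exp.mpr <| by
            gcongr; exact (mem_filter.mp hσ).2
      _ ≤ _ := sum_le_univ_sum_of_nonneg fun σ => (exp_pos _).le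

theorem card_filter_lt_sum_units_lt {ι : Type*} [Fintype ι] [DecidableEq ι] [Nonempty ι]
    {t : ℝ} (ht : 0 < t) :
    (#{σ : ι → ℤˣ | t < ((∑ i, (σ i : ℤ) : ℤ) : ℝ)} : ℝ) <
      2 ^ Fintype.card ι * exp (-(t ^ 2 / (2 * Fintype.card ι))) := by
  set N := Fintype.card ι
  have hN : (0 : ℝ) < N := Nat.cast_pos.mpr Fintype.card_pos
  -- Chernoff with the optimal parameter `l = t / N`
  have key := card_filter_lt_sum_units_mul_exp_lt (ι := ι) (div_pos ht hN) t
  refine lt_of_mul_lt_mul_right (key.trans_le ?_) (exp_pos (t / N * t)).le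
  calc (2 * cosh (t / N)) ^ N ≤ (2 * exp ((t / N) ^ 2 / 2)) ^ N := by
        gcongr; exact cosh_le_exp_half_sq _
    _ = 2 ^ N * exp (-(t ^ 2 / (2 * N))) * exp (t / N * t) := by
        rw [mul_pow, ← exp_nat_mul, mul_assoc, ← exp_add]
        congr 2
        field_simp
        ring

abbrev LineSwitches (n : ℕ) :=
  (Fin n → Fin n → ℤˣ) × (Fin n → Fin n → ℤˣ) × (Fin n → Fin n → ℤˣ)

theorem card_lineSwitches (n : ℕ) : Fintype.card (LineSwitches n) = 2 ^ (3 * n ^ 2) := by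
  simp only [Fintype.card_prod, Fintype.card_fun, Fintype.card_units_int, Fintype.card_fin,
    ← pow_mul, ← pow_add]
  ring_nf

def switchProduct {n : ℕ} (L : LineSwitches n) (p : Fin n × Fin n × Fin n) : ℤˣ :=
  L.1 p.1 p.2.1 * L.2.1 p.1 p.2.2 * L.2.2 p.2.1 p.2.2

theorem exp_neg_sq_div_eq_inv_two_pow {n : ℕ} (hn : 0 < n) :
    exp (-((√(6 * log 2) * (n : ℝ) ^ ((5 : ℝ) / 2)) ^ 2 / (2 * (n ^ 3 : ℕ)))) =
      ((2 : ℝ) ^ (3 * n ^ 2))⁻¹ := by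
  have hn' : (0 : ℝ) < n := Nat.cast_pos.mpr hn
  have h2 : (2 : ℝ) ^ (3 * n ^ 2) = exp ((3 * n ^ 2 : ℕ) * log 2) := by
    rw [exp_nat_mul, exp_log two_pos]
  rw [rpow_five_half hn'.le, exp_neg, h2]
  congr 2
  rw [mul_pow, mul_pow, sq_sqrt (by positivity), sq_sqrt hn'.le]
  field_simp
  push_cast
  ring

theorem exists_signs_forall_sum_mul_switchProduct_le (n : ℕ) :
    ∃ g : Fin n × Fin n × Fin n → ℤˣ, ∀ L : LineSwitches n,
      ((∑ p, ((g p * switchProduct L p : ℤˣ) : ℤ) : ℤ) : ℝ) ≤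
        √(6 * log 2) * (n : ℝ) ^ ((5 : ℝ) / 2) := by
  rcases n.eq_zero_or_pos with rfl | hn
  · exact ⟨fun p => p.1.elim0, fun L => by simp⟩
  set t := √(6 * log 2) * (n : ℝ) ^ ((5 : ℝ) / 2)
  have ht : 0 < t := by
    have : 0 < log 2 := log_pos one_lt_two
    positivity
  have : Nonempty (Fin n) := ⟨⟨0, hn⟩⟩
  have hcount := card_filter_lt_sum_units_lt (ι := Fin n × Fin n × Fin n) ht
  have hcard : Fintype.card (Fin n × Fin n × Fin n) = n ^ 3 := by simp; ring
  rw [hcard, exp_neg_sq_div_eq_inv_two_pow hn] at hcount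
  have hlt : Fintype.card (LineSwitches n) *
      #{σ : Fin n × Fin n × Fin n → ℤˣ | t < ((∑ p, (σ p : ℤ) : ℤ) : ℝ)} <
      Fintype.card (Fin n × Fin n × Fin n → ℤˣ) := by
    rw [card_lineSwitches, Fintype.card_fun, hcard, Fintype.card_units_int]
    have h2 : (0 : ℝ) < 2 ^ (3 * n ^ 2) := by positivity
    have : (2 : ℝ) ^ (3 * n ^ 2) * #{σ : Fin n × Fin n × Fin n → ℤˣ |
        t < ((∑ p, (σ p : ℤ) : ℤ) : ℝ)} < 2 ^ n ^ 3 := by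
      rw [← lt_div_iff₀' h2, div_eq_mul_inv]
      exact hcount
    exact_mod_cast this
  obtain ⟨g, hg⟩ := exists_forall_notMem_of_card_mul_card_lt (fun L σ => σ * switchProduct L)
    (fun L => mul_left_injective _) _ hlt
  exact ⟨g, fun L => not_lt.mp fun h => hg L (mem_filter.mpr ⟨mem_univ _, h⟩)⟩

theorem cube_discrepancy_upper (n : ℕ) :
    ∃ a : Fin n → Fin n → Fin n → ℤ,
      (∀ i j k, a i j k = 1 ∨ a i j k = -1) ∧
      ∀ L₁ L₂ L₃ : Fin n → Fin n → ℤ,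
        (∀ i j, L₁ i j = 1 ∨ L₁ i j = -1) →
        (∀ i k, L₂ i k = 1 ∨ L₂ i k = -1) →
        (∀ j k, L₃ j k = 1 ∨ L₃ j k = -1) →
        ((∑ i, ∑ j, ∑ k, a i j k * L₁ i j * L₂ i k * L₃ j k : ℤ) : ℝ)
          ≤ √(6 * log 2) * (n : ℝ) ^ ((5 : ℝ) / 2) := by
  obtain ⟨g, hg⟩ := exists_signs_forall_sum_mul_switchProduct_le n
  refine ⟨fun i j k => g (i, j, k), fun i j k => Int.isUnit_iff.mp (g _).isUnit, ?_⟩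
  intro L₁ L₂ L₃ h₁ h₂ h₃
  convert hg (fun i j => (Int.isUnit_iff.mpr (h₁ i j)).unit,
    fun i k => (Int.isUnit_iff.mpr (h₂ i k)).unit, fun j k => (Int.isUnit_iff.mpr (h₃ j k)).unit)
    using 2
  simp [Fintype.sum_prod_type, switchProduct, mul_assoc]

/-- The cubic board `{1,…,n}³` with `3n²` line switches: upper bound
`(6 ln 2)^(1/2) n^(5/2)` for some `±1` assignment, and lower bound
`c·n^(5/2)` (absolute `c > 0`) for every `±1` assignment; hence the maximum
discrepancy is `Θ(n^(5/2))`. -/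
theorem stmt_19 :
    (∀ n : ℕ, ∃ a : Fin n → Fin n → Fin n → ℤ,
      (∀ i j k, a i j k = 1 ∨ a i j k = -1) ∧
      ∀ L₁ L₂ L₃ : Fin n → Fin n → ℤ,
        (∀ i j, L₁ i j = 1 ∨ L₁ i j = -1) →
        (∀ i k, L₂ i k = 1 ∨ L₂ i k = -1) →
        (∀ j k, L₃ j k = 1 ∨ L₃ j k = -1) →
        ((∑ i, ∑ j, ∑ k, a i j k * L₁ i j * L₂ i k * L₃ j k : ℤ) : ℝ)
          ≤ Real.sqrt (6 * Real.log 2) * (n : ℝ) ^ ((5 : ℝ)/2)) ∧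
    (∃ c : ℝ, 0 < c ∧ ∀ n : ℕ, ∀ a : Fin n → Fin n → Fin n → ℤ,
      (∀ i j k, a i j k = 1 ∨ a i j k = -1) →
      ∃ L₁ L₂ L₃ : Fin n → Fin n → ℤ,
        (∀ i j, L₁ i j = 1 ∨ L₁ i j = -1) ∧
        (∀ i k, L₂ i k = 1 ∨ L₂ i k = -1) ∧
        (∀ j k, L₃ j k = 1 ∨ L₃ j k = -1) ∧
        c * (n : ℝ) ^ ((5 : ℝ)/2)
          ≤ ((∑ i, ∑ j, ∑ k, a i j k * L₁ i j * L₂ i k * L₃ j k : ℤ) : ℝ)) :=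
  ⟨cube_discrepancy_upper,
    (√3)⁻¹, inv_pos.mpr (sqrt_pos.mpr three_pos), cube_discrepancy_lower⟩
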